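/- arXiv:1307.1915 — 3 statements merged into one kernel-verified Lean document; each statement's English description precedes it below -/
import Mathlib

section
/- Let Q be an instance of the FIFO stack-up problem in which every pallet of plts(Q) has at least two bins in the sequences of Q. If there exists a directed path-decomposition of the sequence graph G_Q of width p − 1, then there exists a processing of Q that uses at most p stack-up places. -/
/-- The configuration of the remaining queues after the bins in `removed`
have been removed from the fronts of the queues of `Q`. -/
def confAfter {B : Type} [DecidableEq B] (Q : List (List B)) (removed : List B) :
    List (List B) :=
  Q.map fun q => q.dropWhile fun b => decide (b ∈ removed)

/-- `ord` is the removal order of a processing of the instance `Q`: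
it is a permutation of all bins, and at every step the removed bin is the
first bin of one of the remaining sequences. -/
def IsProcessing {B : Type} [DecidableEq B] (Q : List (List B)) (ord : List B) : Prop :=
  ord.Perm Q.flatten ∧
  ∀ i (hi : i < ord.length),
    ∃ q ∈ confAfter Q (ord.take i), q.head? = some ord[i]

/-- The set of pallets that are open after the bins in `removed` have been removed:
some bin of the pallet has been removed and some bin of the pallet remains. -/
def openAfter {B P : Type} [DecidableEq B] (Q : List (List B)) (plt : B → P)
    (removed : List B) : Set P :=
  {t | (∃ b ∈ removed, plt b = t) ∧
       ∃ q ∈ confAfter Q removed, ∃ b ∈ q, plt b = t}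

/-- The processing `ord` of `Q` uses at most `p` stack-up places: in every
configuration during the processing at most `p` pallets are open. -/
def UsesAtMost {B P : Type} [DecidableEq B] (Q : List (List B)) (plt : B → P)
    (ord : List B) (p : ℕ) : Prop :=
  ∀ i ≤ ord.length, (openAfter Q plt (ord.take i)).ncard ≤ p

/-- The set of pallet labels of the instance `Q`. -/
def pltsOf {B P : Type} (Q : List (List B)) (plt : B → P) : Set P :=
  {t | ∃ q ∈ Q, ∃ b ∈ q, plt b = t}

/-- Every pallet of the instance has at least two bins in the sequences of `Q`. -/
def EveryPalletTwoBins {B P : Type} (Q : List (List B)) (plt : B → P) : Prop :=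
  ∀ t ∈ pltsOf Q plt, ∃ b₁ b₂, b₁ ≠ b₂ ∧ b₁ ∈ Q.flatten ∧ b₂ ∈ Q.flatten ∧
    plt b₁ = t ∧ plt b₂ = t

/-- The arc relation of the sequence graph `G_Q`: there is an arc `(u,v)` iff
`u ≠ v` and in some sequence of `Q` a bin with label `u` occurs at an earlier
position than a bin with label `v`. -/
def seqArc {B P : Type} (Q : List (List B)) (plt : B → P) (u v : P) : Prop :=
  u ≠ v ∧ ∃ q ∈ Q, ∃ i j : ℕ, i < j ∧
    (∃ b, q[i]? = some b ∧ plt b = u) ∧ (∃ b', q[j]? = some b' ∧ plt b' = v)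

/-- `X` is a directed path-decomposition of the digraph with vertex set `Vs`
and arc relation `A`. -/
def IsDPD {V : Type} (A : V → V → Prop) (Vs : Set V) (X : List (Set V)) : Prop :=
  (∀ C ∈ X, C ⊆ Vs) ∧
  (∀ v ∈ Vs, ∃ i, ∃ hi : i < X.length, v ∈ X[i]) ∧
  (∀ u v, A u v → ∃ i j, i ≤ j ∧ ∃ hi : i < X.length, ∃ hj : j < X.length,
      u ∈ X[i] ∧ v ∈ X[j]) ∧
  (∀ v i j l, i ≤ l → l ≤ j →
    ∀ hi : i < X.length, ∀ hj : j < X.length, ∀ hl : l < X.length,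
      v ∈ X[i] → v ∈ X[j] → v ∈ X[l])

/-!
Process the bags of the decomposition from left to right. While working on bag `X[m]`, remove
any front bin whose pallet lies in `X[m]`; when no such bin exists, move on to `X[m+1]`. Every
open pallet then lies in the current bag, so at most `p` pallets are open at any time. The
processing never gets stuck: if the front bin `d` of a sequence has its pallet outside `X[m]`,
every later bin `c` of that sequence gives an arc `(plt d, plt c)` of `G_Q`, and the interval
property of the decomposition forces `plt c` into a bag after `X[m]`.
-/

namespace List

theorem dropWhile_dropWhile_of_imp {α : Type*} {p q : α → Bool} (h : ∀ a, p a → q a)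
    (l : List α) : (l.dropWhile p).dropWhile q = l.dropWhile q := by
  induction l with
  | nil => rfl
  | cons a l ih =>
    by_cases hpa : p a
    · simp [hpa, h a hpa, ih]
    · simp [dropWhile_cons, hpa]

theorem dropWhile_suffix_dropWhile_of_imp {α : Type*} {p q : α → Bool} (h : ∀ a, p a → q a)
    (l : List α) : l.dropWhile q <:+ l.dropWhile p :=
  dropWhile_dropWhile_of_imp h l ▸ dropWhile_suffix q

theorem eq_of_mem_of_mem_of_nodup_flatten {α : Type*} {L : List (List α)} (hL : L.flatten.Nodup)
    {l₁ l₂ : List α} (h₁ : l₁ ∈ L) (h₂ : l₂ ∈ L) {a : α} (ha₁ : a ∈ l₁) (ha₂ : a ∈ l₂) :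
    l₁ = l₂ := by
  by_contra hne
  have : Std.Symm (@Disjoint α) := ⟨fun _ _ h => h.symm⟩
  exact (nodup_flatten.1 hL).2.forall h₁ h₂ hne ha₁ ha₂

theorem mem_getD_empty_iff {α : Type*} {X : List (Set α)} {i : ℕ} {v : α} :
    v ∈ X.getD i ∅ ↔ ∃ hi : i < X.length, v ∈ X[i] := by
  by_cases hi : i < X.length <;> simp [hi]

end List

open List

section PathDecomposition

variable {V : Type} {A : V → V → Prop} {Vs : Set V} {X : List (Set V)}

theorem IsDPD.getD_subset (hX : IsDPD A Vs X) (i : ℕ) : X.getD i ∅ ⊆ Vs := fun _ hv =>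
  let ⟨hi, hv⟩ := mem_getD_empty_iff.1 hv
  hX.1 _ (getElem_mem hi) hv

theorem IsDPD.exists_mem_getD (hX : IsDPD A Vs X) {v : V} (hv : v ∈ Vs) :
    ∃ i, v ∈ X.getD i ∅ :=
  let ⟨i, hi, hv⟩ := hX.2.1 v hv
  ⟨i, mem_getD_empty_iff.2 ⟨hi, hv⟩⟩

theorem IsDPD.exists_le_of_arc (hX : IsDPD A Vs X) {u v : V} (huv : A u v) :
    ∃ i j, i ≤ j ∧ u ∈ X.getD i ∅ ∧ v ∈ X.getD j ∅ :=
  let ⟨i, j, hij, hi, hj, hu, hv⟩ := hX.2.2.1 u v huv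
  ⟨i, j, hij, mem_getD_empty_iff.2 ⟨hi, hu⟩, mem_getD_empty_iff.2 ⟨hj, hv⟩⟩

theorem IsDPD.mem_getD_of_le_of_le (hX : IsDPD A Vs X) {v : V} {i j l : ℕ}
    (hvi : v ∈ X.getD i ∅) (hvj : v ∈ X.getD j ∅) (hil : i ≤ l) (hlj : l ≤ j) :
    v ∈ X.getD l ∅ := by
  obtain ⟨hi, hvi⟩ := mem_getD_empty_iff.1 hvi
  obtain ⟨hj, hvj⟩ := mem_getD_empty_iff.1 hvj
  exact mem_getD_empty_iff.2 ⟨by omega, hX.2.2.2 v i j l hil hlj hi hj _ hvi hvj⟩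

theorem ncard_getD_le {p : ℕ} (hp : ∀ C ∈ X, C.ncard ≤ p) (i : ℕ) : (X.getD i ∅).ncard ≤ p := by
  by_cases hi : i < X.length
  · rw [getD_eq_getElem _ _ hi]
    exact hp _ (getElem_mem hi)
  · rw [getD_eq_default _ _ (Nat.le_of_not_lt hi), Set.ncard_empty]
    exact Nat.zero_le p

end PathDecomposition

section Configurations

variable {B P : Type} {Q : List (List B)} {plt : B → P} {R R' : List B}

theorem pltsOf_finite (Q : List (List B)) (plt : B → P) : (pltsOf Q plt).Finite :=
  (Q.flatten.finite_toSet.image plt).subset fun _ ⟨q, hq, b, hb, hbt⟩ =>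
    ⟨b, mem_flatten.2 ⟨q, hq, hb⟩, hbt⟩

theorem seqArc_of_suffix {q : List B} (hq : q ∈ Q) {c b : B} {t : List B} (hct : c :: t <:+ q)
    (hb : b ∈ t) (hne : plt c ≠ plt b) : seqArc Q plt (plt c) (plt b) := by
  obtain ⟨pre, rfl⟩ := hct
  obtain ⟨k, hk⟩ := mem_iff_getElem?.1 hb
  refine ⟨hne, _, hq, pre.length, pre.length + (k + 1), by omega, ⟨c, ?_, rfl⟩, ⟨b, ?_, rfl⟩⟩
  · simp
  · rw [getElem?_append_right (by omega), Nat.add_sub_cancel_left]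
    simpa using hk

variable [DecidableEq B]

theorem confAfter_nil (Q : List (List B)) : confAfter Q [] = Q := by
  refine (map_congr_left fun q _ => dropWhile_eq_self_iff.2 ?_).trans (map_id Q)
  simp

theorem openAfter_nil (Q : List (List B)) (plt : B → P) : openAfter Q plt [] = ∅ := by
  simp [openAfter]

theorem exists_suffix_of_mem_confAfter {q' : List B} (hq' : q' ∈ confAfter Q R) :
    ∃ q ∈ Q, q' <:+ q :=
  let ⟨q, hq, hq'⟩ := mem_map.1 hq'
  ⟨q, hq, hq' ▸ dropWhile_suffix _⟩

theorem exists_mem_confAfter_of_not_mem {q : List B} (hq : q ∈ Q) {b : B} (hb : b ∈ q)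
    (hbR : b ∉ R) : ∃ q' ∈ confAfter Q R, b ∈ q' := by
  refine ⟨_, mem_map_of_mem hq, ?_⟩
  rw [← takeWhile_append_dropWhile (p := fun b => decide (b ∈ R)) (l := q)] at hb
  rcases mem_append.1 hb with hb | hb
  · exact absurd (of_decide_eq_true (mem_takeWhile_imp (p := fun b => decide (b ∈ R)) hb)) hbR
  · exact hb

theorem exists_mem_confAfter_of_subset (hRR' : R ⊆ R') {q' : List B}
    (hq' : q' ∈ confAfter Q R') {b : B} (hb : b ∈ q') : ∃ q ∈ confAfter Q R, b ∈ q := by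
  obtain ⟨q, hq, rfl⟩ := mem_map.1 hq'
  refine ⟨_, mem_map_of_mem hq, (dropWhile_suffix_dropWhile_of_imp ?_ q).subset hb⟩
  simpa using fun a ha => hRR' ha

theorem openAfter_append_singleton_subset (b : B) :
    openAfter Q plt (R ++ [b]) ⊆ insert (plt b) (openAfter Q plt R) := by
  rintro t ⟨⟨c, hc, rfl⟩, q', hq', d, hd, hdc⟩
  rcases mem_append.1 hc with hc | hc
  · obtain ⟨q, hq, hdq⟩ := exists_mem_confAfter_of_subset (subset_append_left R [b]) hq' hd
    exact Or.inr ⟨⟨c, hc, rfl⟩, q, hq, d, hdq, hdc⟩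
  · exact Or.inl (by rw [mem_singleton.1 hc])

/-- Since `confAfter` strips only leading removed bins, the last condition says that the removed
bins form a prefix of every sequence. -/
def IsPrefixRemoval (Q : List (List B)) (R : List B) : Prop :=
  R.Nodup ∧ R ⊆ Q.flatten ∧ ∀ q ∈ confAfter Q R, ∀ b ∈ q, b ∉ R

theorem isPrefixRemoval_nil (Q : List (List B)) : IsPrefixRemoval Q [] := by
  simp [IsPrefixRemoval]

theorem IsPrefixRemoval.length_le (h : IsPrefixRemoval Q R) : R.length ≤ Q.flatten.length :=
  (h.1.subperm h.2.1).length_le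

theorem IsPrefixRemoval.perm (hnd : Q.flatten.Nodup) (h : IsPrefixRemoval Q R)
    (hempty : ∀ q ∈ confAfter Q R, q = []) : R.Perm Q.flatten := by
  refine (perm_ext_iff_of_nodup h.1 hnd).2 fun b => ⟨fun hb => h.2.1 hb, fun hb => ?_⟩
  by_contra hbR
  obtain ⟨q, hq, hbq⟩ := mem_flatten.1 hb
  obtain ⟨q', hq', hbq'⟩ := exists_mem_confAfter_of_not_mem hq hbq hbR
  simp [hempty q' hq'] at hbq'

theorem IsPrefixRemoval.append_singleton (hnd : Q.flatten.Nodup) (h : IsPrefixRemoval Q R)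
    {b : B} (hb : ∃ q ∈ confAfter Q R, q.head? = some b) : IsPrefixRemoval Q (R ++ [b]) := by
  obtain ⟨q', hq', hhead⟩ := hb
  obtain ⟨q, hq, rfl⟩ := mem_map.1 hq'
  obtain ⟨rest, hrest⟩ := head?_eq_some_iff.1 hhead
  have hbR : b ∉ R := h.2.2 _ hq' b (by simp [hrest])
  have hsuf : b :: rest <:+ q := hrest ▸ dropWhile_suffix _
  have hbrest : b ∉ rest := (nodup_cons.1 ((nodup_flatten.1 hnd).1 q hq |>.sublist hsuf.sublist)).1
  have hbQ : b ∈ Q.flatten := mem_flatten.2 ⟨q, hq, hsuf.subset mem_cons_self⟩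
  refine ⟨h.1.append (nodup_singleton b) (by simpa using hbR),
    append_subset.2 ⟨h.2.1, by simpa using hbQ⟩, ?_⟩
  intro q₂' hq₂' c hc
  obtain ⟨q₂, hq₂, rfl⟩ := mem_map.1 hq₂'
  have hRR' : ∀ a, decide (a ∈ R) = true → decide (a ∈ R ++ [b]) = true := by simp_all
  have hcR : c ∉ R :=
    h.2.2 _ (mem_map_of_mem hq₂) c ((dropWhile_suffix_dropWhile_of_imp hRR' q₂).subset hc)
  intro hc'
  rcases mem_append.1 hc' with hc' | hcb
  · exact hcR hc'
  · have hcb : c = b := mem_singleton.1 hcb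
    have hbq₂ : b ∈ q₂ := hcb ▸ (dropWhile_suffix _).subset hc
    obtain rfl : q₂ = q :=
      eq_of_mem_of_mem_of_nodup_flatten hnd hq₂ hq hbq₂ (hsuf.subset mem_cons_self)
    rw [← dropWhile_dropWhile_of_imp hRR', hrest, dropWhile_cons, if_pos (by simp)] at hc
    exact hbrest (hcb ▸ (dropWhile_suffix _).subset hc)

end Configurations

section Greedy

variable {B P : Type} [DecidableEq B] {Q : List (List B)} {plt : B → P} {p : ℕ}

def ProcessesFrom (Q : List (List B)) (plt : B → P) (p : ℕ) (R ord : List B) : Prop :=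
  (R ++ ord).Perm Q.flatten ∧
  ∀ i ≤ ord.length, (openAfter Q plt (R ++ ord.take i)).ncard ≤ p ∧
    ∀ hi : i < ord.length, ∃ q ∈ confAfter Q (R ++ ord.take i), q.head? = some ord[i]

theorem ProcessesFrom.nil {R : List B} (hperm : R.Perm Q.flatten)
    (hopen : (openAfter Q plt R).ncard ≤ p) : ProcessesFrom Q plt p R [] :=
  ⟨by simpa using hperm, fun i hi => by simp_all⟩

theorem ProcessesFrom.cons {R ord : List B} {b : B} (hb : ∃ q ∈ confAfter Q R, q.head? = some b)
    (hopen : (openAfter Q plt R).ncard ≤ p) (h : ProcessesFrom Q plt p (R ++ [b]) ord) :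
    ProcessesFrom Q plt p R (b :: ord) := by
  refine ⟨by simpa using h.1, fun i hi => ?_⟩
  cases i with
  | zero => simpa using ⟨hopen, hb⟩
  | succ i => simpa using h.2 i (by simpa using hi)

variable {X : List (Set P)}

theorem ncard_openAfter_le (hX : IsDPD (seqArc Q plt) (pltsOf Q plt) X)
    (hp : ∀ C ∈ X, C.ncard ≤ p) {R : List B} {m : ℕ} (hopen : openAfter Q plt R ⊆ X.getD m ∅) :
    (openAfter Q plt R).ncard ≤ p :=
  (Set.ncard_le_ncard hopen ((pltsOf_finite Q plt).subset (hX.getD_subset m))).trans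
    (ncard_getD_le hp m)

theorem remaining_mem_getD_succ_of_stuck (hX : IsDPD (seqArc Q plt) (pltsOf Q plt) X)
    {R : List B} {m : ℕ}
    (hrem : ∀ q ∈ confAfter Q R, ∀ b ∈ q, ∃ j, m ≤ j ∧ plt b ∈ X.getD j ∅)
    (hstuck : ∀ q ∈ confAfter Q R, ∀ b, q.head? = some b → plt b ∉ X.getD m ∅) :
    ∀ q ∈ confAfter Q R, ∀ b ∈ q, ∃ j, m + 1 ≤ j ∧ plt b ∈ X.getD j ∅ := by
  rintro (_ | ⟨d, t⟩) hq c hc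
  · exact absurd hc not_mem_nil
  have hdm : plt d ∉ X.getD m ∅ := hstuck _ hq d rfl
  obtain ⟨jd, hmjd, hd⟩ := hrem _ hq d mem_cons_self
  have hjd : m + 1 ≤ jd := by
    rcases Nat.lt_or_eq_of_le hmjd with h | rfl
    · exact h
    · exact absurd hd hdm
  rcases mem_cons.1 hc with rfl | hct
  · exact ⟨jd, hjd, hd⟩
  by_cases hdc : plt d = plt c
  · exact ⟨jd, hjd, hdc ▸ hd⟩
  obtain ⟨q₀, hq₀, hsuf⟩ := exists_suffix_of_mem_confAfter hq
  obtain ⟨i, j, hij, hi, hj⟩ := hX.exists_le_of_arc (seqArc_of_suffix hq₀ hsuf hct hdc)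
  refine ⟨j, Nat.succ_le_of_lt (Nat.lt_of_not_le fun hjm => hdm ?_), hj⟩
  exact hX.mem_getD_of_le_of_le hi hd (hij.trans hjm) hmjd

theorem openAfter_subset_getD_succ (hX : IsDPD (seqArc Q plt) (pltsOf Q plt) X)
    {R : List B} {m : ℕ} (hopen : openAfter Q plt R ⊆ X.getD m ∅)
    (hrem : ∀ q ∈ confAfter Q R, ∀ b ∈ q, ∃ j, m + 1 ≤ j ∧ plt b ∈ X.getD j ∅) :
    openAfter Q plt R ⊆ X.getD (m + 1) ∅ := by
  intro t ht
  obtain ⟨-, q, hq, b, hb, hbt⟩ := id ht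
  obtain ⟨j, hj, hbj⟩ := hrem q hq b hb
  subst hbt
  exact hX.mem_getD_of_le_of_le (hopen ht) hbj (Nat.le_succ m) hj

theorem exists_processesFrom (hnd : Q.flatten.Nodup)
    (hX : IsDPD (seqArc Q plt) (pltsOf Q plt) X) (hp : ∀ C ∈ X, C.ncard ≤ p)
    (R : List B) (m : ℕ) (hR : IsPrefixRemoval Q R)
    (hrem : ∀ q ∈ confAfter Q R, ∀ b ∈ q, ∃ j, m ≤ j ∧ plt b ∈ X.getD j ∅)
    (hopen : openAfter Q plt R ⊆ X.getD m ∅) :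
    ∃ ord, ProcessesFrom Q plt p R ord := by
  have hbound := ncard_openAfter_le hX hp hopen
  by_cases hpop : ∃ q ∈ confAfter Q R, ∃ b, q.head? = some b ∧ plt b ∈ X.getD m ∅
  · obtain ⟨q, hq, b, hhead, hbm⟩ := hpop
    have hR' := hR.append_singleton hnd ⟨q, hq, hhead⟩
    have hlen : R.length < Q.flatten.length := by simpa using hR'.length_le
    obtain ⟨ord, hord⟩ := exists_processesFrom hnd hX hp (R ++ [b]) m hR'
      (fun q hq c hc =>
        let ⟨_, hq', hc'⟩ := exists_mem_confAfter_of_subset (subset_append_left R [b]) hq hc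
        hrem _ hq' c hc')
      ((openAfter_append_singleton_subset b).trans (Set.insert_subset hbm hopen))
    exact ⟨b :: ord, hord.cons ⟨q, hq, hhead⟩ hbound⟩
  push Not at hpop
  by_cases hm : m < X.length
  · have hrem' := remaining_mem_getD_succ_of_stuck hX hrem hpop
    exact exists_processesFrom hnd hX hp R (m + 1) hR hrem'
      (openAfter_subset_getD_succ hX hopen hrem')
  · refine ⟨[], .nil (hR.perm hnd fun q hq => eq_nil_iff_forall_not_mem.2 fun b hb => ?_) hbound⟩
    obtain ⟨j, hmj, hbj⟩ := hrem q hq b hb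
    exact hm (hmj.trans_lt (mem_getD_empty_iff.1 hbj).1)
termination_by (Q.flatten.length - R.length) + (X.length - m)
decreasing_by
  · simp only [length_append, length_singleton]; omega
  · omega

end Greedy

theorem dpd_gives_processing_general {B P : Type} [DecidableEq B]
    (Q : List (List B)) (plt : B → P) (hnd : Q.flatten.Nodup)
    (p : ℕ)
    (hX : ∃ X : List (Set P), IsDPD (seqArc Q plt) (pltsOf Q plt) X ∧
      ∀ C ∈ X, C.ncard ≤ p) :
    ∃ ord : List B, IsProcessing Q ord ∧ UsesAtMost Q plt ord p := by
  obtain ⟨X, hX, hp⟩ := hX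
  have hrem : ∀ q ∈ confAfter Q [], ∀ b ∈ q, ∃ j, 0 ≤ j ∧ plt b ∈ X.getD j ∅ := by
    intro q hq b hb
    rw [confAfter_nil] at hq
    obtain ⟨j, hj⟩ := hX.exists_mem_getD ⟨q, hq, b, hb, rfl⟩
    exact ⟨j, j.zero_le, hj⟩
  obtain ⟨ord, hperm, hord⟩ := exists_processesFrom hnd hX hp [] 0 (isPrefixRemoval_nil Q) hrem
    (by simp [openAfter_nil])
  exact ⟨ord, ⟨hperm, fun i hi => (hord i hi.le).2 hi⟩, fun i hi => (hord i hi).1⟩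

/-- If every pallet of `Q` has at least two bins and there is
a directed path-decomposition of the sequence graph `G_Q` of width `p - 1`
(i.e. every bag has at most `p` elements), then there is a processing of `Q`
that uses at most `p` stack-up places. -/
theorem dpd_gives_processing {B P : Type} [DecidableEq B]
    (Q : List (List B)) (plt : B → P) (hnd : Q.flatten.Nodup)
    (htwo : EveryPalletTwoBins Q plt) (p : ℕ)
    (hX : ∃ X : List (Set P), IsDPD (seqArc Q plt) (pltsOf Q plt) X ∧
      ∀ C ∈ X, C.ncard ≤ p) :
    ∃ ord : List B, IsProcessing Q ord ∧ UsesAtMost Q plt ord p :=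
  dpd_gives_processing_general Q plt hnd p hX
end

section
/- Let Q be an instance of the FIFO stack-up problem in which every pallet of plts(Q) has at least two bins in the sequences of Q, and let X = (X_1, …, X_r) be a directed path-decomposition of the sequence graph G_Q. Consider the processing of Q that, in every decision configuration (Q,Q'), opens a pallet t ∈ front(Q') for which α(X,t) is minimal, and in every other configuration removes a front bin destined for an already open pallet. Then for every configuration (Q,Q') reached during this processing there is a bag X_i with open(Q,Q') ⊆ X_i. -/
/-- The set `front(Q')` of pallet labels of the first bins of the nonempty
remaining sequences of a configuration `C`. -/
def frontOf {B P : Type} (plt : B → P) (C : List (List B)) : Set P :=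
  {t | ∃ q ∈ C, ∃ b, q.head? = some b ∧ plt b = t}

/-- `α(X,t)`: the smallest index `i` with `t ∈ X i`. -/
noncomputable def dpdFirst {V : Type} (X : List (Set V)) (t : V) : ℕ :=
  sInf {i | ∃ hi : i < X.length, t ∈ X[i]}

/-!
Let `w` be the open pallet whose first bag `α(w)` comes last. Every open pallet `u` has
`α(u) ≤ α(w)`, so by the interval property it suffices to find a bag at or after `α(w)`
containing `u`. Look at the step that removed the first bin of `w`: no bin of `w` had been
removed, so it was a decision configuration, and a bin of `u` was still waiting in some
sequence. The front pallet `t` of that sequence is `u` itself or has an arc `t → u` in `G_Q`,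
so `u` lies in a bag at or after `α(t)`, and `α(w) ≤ α(t)` by the greedy choice.
-/

namespace List

theorem dropWhile_suffix_dropWhile {α : Type*} {p p' : α → Bool}
    (h : ∀ a, p a → p' a) (l : List α) : l.dropWhile p' <:+ l.dropWhile p := by
  induction l with
  | nil => exact suffix_refl _
  | cons a l ih =>
    by_cases hp : p a
    · simpa [hp, h a hp] using ih
    · rw [dropWhile_cons_of_neg (p := p) (by simpa using hp)]
      by_cases hp' : p' a
      · rw [dropWhile_cons_of_pos hp']
        exact (dropWhile_suffix _).trans (suffix_cons _ _)
      · rw [dropWhile_cons_of_neg (p := p') (by simpa using hp')]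

theorem exists_lt_getElem?_of_pair_sublist {α : Type*} {a b : α} {l : List α}
    (h : [a, b] <+ l) : ∃ i j : ℕ, i < j ∧ l[i]? = some a ∧ l[j]? = some b := by
  obtain ⟨f, hf⟩ := sublist_iff_exists_orderEmbedding_getElem?_eq.1 h
  exact ⟨f 0, f 1, f.strictMono zero_lt_one, (hf 0).symm, (hf 1).symm⟩

end List

section Configurations

variable {B P : Type} [DecidableEq B] {Q : List (List B)} {plt : B → P}

lemma exists_mem_confAfter_of_subset_s11 {removed removed' : List B} (h : removed ⊆ removed')
    {r' : List B} (hr' : r' ∈ confAfter Q removed') {x : B} (hx : x ∈ r') :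
    ∃ r ∈ confAfter Q removed, x ∈ r := by
  obtain ⟨q, hq, rfl⟩ := List.mem_map.1 hr'
  refine ⟨_, List.mem_map.2 ⟨q, hq, rfl⟩, ?_⟩
  exact (List.dropWhile_suffix_dropWhile (fun b hb => by simpa using h (by simpa using hb)) q)
    |>.subset hx

lemma mem_pltsOf_of_mem_confAfter {removed r : List B} (hr : r ∈ confAfter Q removed)
    {x : B} (hx : x ∈ r) : plt x ∈ pltsOf Q plt := by
  obtain ⟨q, hq, rfl⟩ := List.mem_map.1 hr
  exact ⟨q, hq, x, List.dropWhile_subset _ hx, rfl⟩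

lemma openAfter_subset_pltsOf (removed : List B) :
    openAfter Q plt removed ⊆ pltsOf Q plt :=
  fun _ ⟨_, _, hr, _, hx, hxt⟩ => hxt ▸ mem_pltsOf_of_mem_confAfter hr hx

lemma exists_mem_frontOf_seqArc {removed r : List B} (hr : r ∈ confAfter Q removed)
    {x : B} (hx : x ∈ r) :
    ∃ t ∈ frontOf plt (confAfter Q removed), t = plt x ∨ seqArc Q plt t (plt x) := by
  obtain ⟨q, hq, rfl⟩ := List.mem_map.1 hr
  obtain ⟨f, rest, hfr⟩ := List.exists_cons_of_ne_nil (List.ne_nil_of_mem hx)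
  refine ⟨plt f, ⟨_, hr, f, by rw [hfr]; rfl, rfl⟩, ?_⟩
  by_cases hfx : plt f = plt x
  · exact .inl hfx
  right
  have hxrest : x ∈ rest := by
    rw [hfr] at hx
    exact (List.mem_cons.1 hx).resolve_left (by rintro rfl; exact hfx rfl)
  have hsub : List.Sublist [f, x] q := by
    refine List.Sublist.trans ?_ (hfr ▸ List.dropWhile_sublist _)
    exact List.cons_sublist_cons.2 (List.singleton_sublist.2 hxrest)
  exact ⟨hfx, q, hq, List.exists_lt_getElem?_of_pair_sublist hsub |>.imp
    fun i ⟨j, hij, hi, hj⟩ => ⟨j, hij, ⟨f, hi, rfl⟩, ⟨x, hj, rfl⟩⟩⟩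

end Configurations

namespace IsDPD

variable {V : Type} {A : V → V → Prop} {Vs : Set V} {X : List (Set V)}

lemma dpdFirst_spec (hX : IsDPD A Vs X) {v : V} (hv : v ∈ Vs) :
    ∃ h : dpdFirst X v < X.length, v ∈ X[dpdFirst X v] :=
  Nat.sInf_mem (hX.2.1 v hv)

lemma exists_mem_of_arc (hX : IsDPD A Vs X) {u v : V} (h : A u v) :
    ∃ j, ∃ hj : j < X.length, dpdFirst X u ≤ j ∧ v ∈ X[j] := by
  obtain ⟨i, j, hij, hi, hj, hu, hv⟩ := hX.2.2.1 u v h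
  have hui : dpdFirst X u ≤ i := Nat.sInf_le ⟨hi, hu⟩
  exact ⟨j, hj, hui.trans hij, hv⟩

lemma mem_of_dpdFirst_le_of_le (hX : IsDPD A Vs X) {v : V} (hv : v ∈ Vs) {l j : ℕ}
    (hl : l < X.length) (hj : j < X.length) (hvl : dpdFirst X v ≤ l) (hlj : l ≤ j)
    (hvj : v ∈ X[j]) : v ∈ X[l] :=
  let ⟨h, hmem⟩ := hX.dpdFirst_spec hv
  hX.2.2.2 v _ j l hvl hlj h hj hl hmem hvj

end IsDPD

open Classical in
def IsAlphaGreedy {B P : Type} [DecidableEq B] (Q : List (List B)) (plt : B → P)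
    (X : List (Set P)) (ord : List B) : Prop :=
  ∀ i (hi : i < ord.length),
    if frontOf plt (confAfter Q (ord.take i)) ∩ openAfter Q plt (ord.take i) = ∅
    then plt ord[i] ∈ frontOf plt (confAfter Q (ord.take i)) ∧
         ∀ t ∈ frontOf plt (confAfter Q (ord.take i)),
           dpdFirst X (plt ord[i]) ≤ dpdFirst X t
    else plt ord[i] ∈ openAfter Q plt (ord.take i)

section Greedy

variable {B P : Type} [DecidableEq B] {Q : List (List B)} {plt : B → P}
  {X : List (Set P)} {ord : List B}

lemma IsAlphaGreedy.exists_opening_step (hg : IsAlphaGreedy Q plt X ord) {n : ℕ} {w : P}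
    (hw : w ∈ openAfter Q plt (ord.take n)) :
    ∃ j < n, ∀ t ∈ frontOf plt (confAfter Q (ord.take j)), dpdFirst X w ≤ dpdFirst X t := by
  classical
  obtain ⟨⟨b, hb, rfl⟩, -⟩ := hw
  obtain ⟨i, hi, rfl⟩ := List.mem_take_iff_getElem.1 hb
  have hex : ∃ j, ∃ h : j < ord.length, plt ord[j] = plt ord[i] :=
    ⟨i, (lt_min_iff.1 hi).2, rfl⟩
  obtain ⟨hj, hjw⟩ := Nat.find_spec hex
  have hjn : Nat.find hex < n :=
    (Nat.find_min' hex ⟨(lt_min_iff.1 hi).2, rfl⟩).trans_lt (lt_min_iff.1 hi).1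
  have hdecision : frontOf plt (confAfter Q (ord.take (Nat.find hex))) ∩
      openAfter Q plt (ord.take (Nat.find hex)) = ∅ := by
    by_contra hopen
    have hstep := hg _ hj
    rw [if_neg hopen] at hstep
    obtain ⟨⟨b', hb', hpb'⟩, -⟩ := hstep
    obtain ⟨k, hk, rfl⟩ := List.mem_take_iff_getElem.1 hb'
    exact Nat.find_min hex (lt_min_iff.1 hk).1 ⟨(lt_min_iff.1 hk).2, hpb'.trans hjw⟩
  have hstep := hg _ hj
  rw [if_pos hdecision] at hstep
  exact ⟨_, hjn, hjw ▸ hstep.2⟩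

lemma IsAlphaGreedy.exists_mem_bag_ge (hg : IsAlphaGreedy Q plt X ord)
    (hX : IsDPD (seqArc Q plt) (pltsOf Q plt) X) {n : ℕ} {w u : P}
    (hw : w ∈ openAfter Q plt (ord.take n))
    (hu : ∃ r ∈ confAfter Q (ord.take n), ∃ x ∈ r, plt x = u) :
    ∃ j, ∃ hj : j < X.length, dpdFirst X w ≤ j ∧ u ∈ X[j] := by
  obtain ⟨r, hr, x, hx, rfl⟩ := hu
  obtain ⟨k, hkn, hgreedy⟩ := hg.exists_opening_step hw
  obtain ⟨r', hr', hxr'⟩ :=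
    exists_mem_confAfter_of_subset_s11 (List.take_subset_take_left _ hkn.le) hr hx
  obtain ⟨t, ht, hteq | harc⟩ := exists_mem_frontOf_seqArc (plt := plt) hr' hxr'
  · obtain ⟨h, hmem⟩ := hX.dpdFirst_spec (mem_pltsOf_of_mem_confAfter hr hx)
    exact ⟨_, h, hteq ▸ hgreedy t ht, hmem⟩
  · obtain ⟨j, hj, htj, hmem⟩ := hX.exists_mem_of_arc harc
    exact ⟨j, hj, (hgreedy t ht).trans htj, hmem⟩

end Greedy

open Classical in
theorem greedy_open_subset_bag_general {B P : Type} [DecidableEq B]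
    (Q : List (List B)) (plt : B → P)
    (X : List (Set P)) (hXne : X ≠ [])
    (hX : IsDPD (seqArc Q plt) (pltsOf Q plt) X)
    (ord : List B)
    (hgreedy : ∀ i (hi : i < ord.length),
      if frontOf plt (confAfter Q (ord.take i)) ∩ openAfter Q plt (ord.take i) = ∅
      then plt ord[i] ∈ frontOf plt (confAfter Q (ord.take i)) ∧
           ∀ t ∈ frontOf plt (confAfter Q (ord.take i)),
             dpdFirst X (plt ord[i]) ≤ dpdFirst X t
      else plt ord[i] ∈ openAfter Q plt (ord.take i)) :
    ∀ i ≤ ord.length, ∃ idx, ∃ h : idx < X.length,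
      openAfter Q plt (ord.take i) ⊆ X[idx] := by
  intro n _
  set S := openAfter Q plt (ord.take n)
  rcases S.eq_empty_or_nonempty with hS | hS
  · exact ⟨0, List.length_pos_iff.2 hXne, hS ▸ Set.empty_subset _⟩
  have hfin : S.Finite := ((ord.take n).finite_toSet.image plt).subset
    fun _ ⟨⟨b, hb, hpb⟩, _⟩ => ⟨b, hb, hpb⟩
  obtain ⟨w, hwS, hmax⟩ := Set.exists_max_image S (dpdFirst X) hfin hS
  obtain ⟨hw, -⟩ := hX.dpdFirst_spec (openAfter_subset_pltsOf _ hwS)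
  refine ⟨_, hw, fun u hu => ?_⟩
  obtain ⟨j, hj, hwj, hmem⟩ :=
    (show IsAlphaGreedy Q plt X ord from hgreedy).exists_mem_bag_ge hX hwS hu.2
  exact hX.mem_of_dpdFirst_le_of_le (openAfter_subset_pltsOf _ hu) hw hj (hmax u hu) hwj hmem

open Classical in
/-- Let every pallet of `Q` have at least two bins and let
`X` be a directed path-decomposition of the sequence graph `G_Q`. Consider a
processing of `Q` that in every decision configuration opens a pallet
`t ∈ front(Q')` with `α(X,t)` minimal, and in every other configuration
removes a front bin destined for an already open pallet. Then for every
configuration reached during this processing there is a bag `X i` containing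
all open pallets. -/
theorem greedy_open_subset_bag {B P : Type} [DecidableEq B]
    (Q : List (List B)) (plt : B → P) (hnd : Q.flatten.Nodup)
    (htwo : EveryPalletTwoBins Q plt)
    (X : List (Set P)) (hXne : X ≠ [])
    (hX : IsDPD (seqArc Q plt) (pltsOf Q plt) X)
    (ord : List B) (hproc : IsProcessing Q ord)
    (hgreedy : ∀ i (hi : i < ord.length),
      if frontOf plt (confAfter Q (ord.take i)) ∩ openAfter Q plt (ord.take i) = ∅
      then plt ord[i] ∈ frontOf plt (confAfter Q (ord.take i)) ∧
           ∀ t ∈ frontOf plt (confAfter Q (ord.take i)),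
             dpdFirst X (plt ord[i]) ≤ dpdFirst X t
      else plt ord[i] ∈ openAfter Q plt (ord.take i)) :
    ∀ i ≤ ord.length, ∃ idx, ∃ h : idx < X.length,
      openAfter Q plt (ord.take i) ⊆ X[idx] :=
  greedy_open_subset_bag_general Q plt X hXne hX ord hgreedy
end

section
/- Let Q be an instance of the FIFO stack-up problem and let T = (t_1, …, t_m) be the pallet solution of some processing P of Q. Let P' be any processing of Q that follows the greedy rule: whenever the first bin of some remaining sequence is destined for an already open pallet, such a bin is removed; otherwise the next not yet opened pallet of T is opened by removing a front bin destined for it. Then P' also has pallet solution T, and the maximum number of simultaneously open pallets over all configurations of P' is at most the maximum number of simultaneously open pallets over all configurations of P; that is, no processing of Q with pallet solution T uses fewer stack-up places than the greedy processing. -/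
/-- Keep only the first occurrence of every element of a list (preserving the
order of first occurrences). Applied to the list of pallet labels of a removal
order this yields the pallet solution: the order in which pallets are opened. -/
def firstDedup {P : Type} [DecidableEq P] : List P → List P
  | [] => []
  | t :: ts => t :: firstDedup (ts.filter fun x => decide (x ≠ t))
termination_by l => l.length
decreasing_by
  simp
  exact (List.length_filter_le _ _).trans (by simp)

/-! The greedy processing opens the pallets in the order of `T`: it opens a new pallet only when
no front bin belongs to an open pallet, and then it opens the first pallet of `T` not yet opened.

For the comparison fix a step of the greedy processing, let `t` be the pallet it opened last, at
step `s`, and let `y` be the step at which `P` opens `t`; up to these steps both have opened the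
same pallets. Every bin that `P` removes before `y` was removed by the greedy processing before
`s`: otherwise the front bin of its sequence at step `s` precedes it, so `P` removed that front
bin before `y`; its pallet was then already opened, hence open at step `s`, and the greedy rule
would not have opened `t`. Consequently every pallet open at the chosen step of the greedy
processing is also open in `P` right after step `y`. -/

section FirstDedup
variable {P : Type} [DecidableEq P]

@[simp] theorem firstDedup_nil : firstDedup ([] : List P) = [] := by
  rw [firstDedup]

theorem firstDedup_cons (t : P) (ts : List P) :
    firstDedup (t :: ts) = t :: firstDedup (ts.filter fun x => decide (x ≠ t)) := by
  rw [firstDedup]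

@[simp] theorem mem_firstDedup {a : P} : ∀ {l : List P}, a ∈ firstDedup l ↔ a ∈ l
  | [] => by simp
  | t :: ts => by
    have ih := @mem_firstDedup a (ts.filter fun x => decide (x ≠ t))
    rw [firstDedup_cons, List.mem_cons, ih, List.mem_cons, List.mem_filter]
    by_cases h : a = t <;> simp [h]
termination_by l => l.length
decreasing_by simpa using Nat.lt_succ_of_le (List.length_filter_le _ ts)

theorem nodup_firstDedup : ∀ l : List P, (firstDedup l).Nodup
  | [] => by simp
  | t :: ts => by
    rw [firstDedup_cons, List.nodup_cons]
    exact ⟨by simp, nodup_firstDedup _⟩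
termination_by l => l.length
decreasing_by simpa using Nat.lt_succ_of_le (List.length_filter_le _ ts)

theorem firstDedup_append : ∀ u v : List P,
    firstDedup (u ++ v) = firstDedup u ++ firstDedup (v.filter fun x => decide (x ∉ u))
  | [], v => by simp
  | t :: ts, v => by
    rw [List.cons_append, firstDedup_cons, firstDedup_cons, List.filter_append,
      firstDedup_append, List.filter_filter, List.cons_append]
    congr 3
    apply List.filter_congr
    intro x _
    by_cases h : x = t <;> simp [h]
termination_by u => u.length
decreasing_by simpa using Nat.lt_succ_of_le (List.length_filter_le _ ts)

theorem firstDedup_concat (l : List P) (a : P) :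
    firstDedup (l ++ [a]) = if a ∈ l then firstDedup l else firstDedup l ++ [a] := by
  rw [firstDedup_append]
  split_ifs with h <;> simp [h, firstDedup_cons]

theorem List.IsPrefix.firstDedup {l₁ l₂ : List P} (h : l₁ <+: l₂) :
    _root_.firstDedup l₁ <+: _root_.firstDedup l₂ := by
  obtain ⟨r, rfl⟩ := h
  rw [firstDedup_append]
  exact List.prefix_append _ _

end FirstDedup

namespace List
variable {B P : Type}

theorem eq_take_of_append_getElem_prefix {u T : List P} (hT : T.Nodup) {k : ℕ}
    (hk : k < T.length) (h : u ++ [T[k]] <+: T) : u = T.take k := by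
  have hlen : u.length < T.length := by simpa using h.length_le
  have hget := h.getElem (i := u.length) (by simp)
  simp only [getElem_append_right (le_refl _), Nat.sub_self, getElem_singleton] at hget
  rw [prefix_iff_eq_take.mp ((prefix_append u _).trans h), (hT.getElem_inj_iff.mp hget).symm]

theorem head?_filter_not_mem_eq_getElem? [DecidableEq P] {T s : List P} (hT : T.Nodup) {n : ℕ}
    (hs : ∀ x, x ∈ s ↔ x ∈ T.take n) :
    (T.filter fun x => decide (x ∉ s)).head? = T[n]? := by
  have hnil : (T.take n).filter (fun x => decide (x ∉ s)) = [] := by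
    simp [filter_eq_nil_iff, hs]
  rw [← take_append_drop n T, filter_append, hnil, nil_append]
  rcases lt_or_ge n T.length with hn | hn
  · have hfresh : T[n] ∉ s := by
      rw [hs]
      exact fun hmem => (take_append_drop n T ▸ hT).disjoint hmem
        (by rw [drop_eq_getElem_cons hn]; exact mem_cons_self)
    rw [drop_eq_getElem_cons hn, filter_cons_of_pos (by simpa using hfresh)]
    simp [getElem?_eq_getElem hn]
  · simp [drop_eq_nil_of_le hn]

theorem exists_getElem_eq_not_mem_map_take {l : List B} {f : B → P} {a : P} (h : a ∈ l.map f) :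
    ∃ s, ∃ hs : s < l.length, f l[s] = a ∧ a ∉ (l.take s).map f := by
  obtain ⟨as, bs, heq, hna⟩ := eq_append_cons_of_mem h
  have hs : as.length < l.length := by
    have := congrArg length heq
    simp only [length_map, length_append, length_cons] at this
    omega
  refine ⟨as.length, hs, ?_, ?_⟩
  · have hget : (l.map f)[as.length]? = some a := by simp [heq]
    simpa [getElem?_eq_getElem hs] using hget
  · rwa [map_take, heq, take_left' rfl]

theorem mem_dropWhile_iff {q : List B} {p : B → Bool} (hp : ∀ x ∈ q.dropWhile p, p x = false)
    {b : B} : b ∈ q.dropWhile p ↔ b ∈ q ∧ p b = false := by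
  refine ⟨fun h => ⟨(dropWhile_sublist p).mem h, hp b h⟩, fun ⟨hb, hpb⟩ => ?_⟩
  rw [← takeWhile_append_dropWhile (p := p) (l := q)] at hb
  rcases mem_append.mp hb with h | h
  · simp [mem_takeWhile_imp h] at hpb
  · exact h

theorem exists_dropWhile_eq_cons {p r : B → Bool} :
    ∀ {q : List B}, (∀ x ∈ q.dropWhile p, p x = false) → ∀ {b : B}, b ∈ q → p b → r b = false →
      ∃ a rest, q.dropWhile r = a :: rest ∧ p a
  | [], _, _, hb, _, _ => absurd hb not_mem_nil
  | c :: q, hp, b, hb, hpb, hrb => by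
    by_cases hpc : p c
    · by_cases hrc : r c
      · rw [dropWhile_cons, if_pos hrc]
        rw [dropWhile_cons, if_pos hpc] at hp
        exact exists_dropWhile_eq_cons hp
          ((mem_cons.mp hb).resolve_left (by rintro rfl; simp [hrc] at hrb)) hpb hrb
      · exact ⟨c, q, by simp [hrc], hpc⟩
    · rw [dropWhile_cons, if_neg hpc] at hp
      simp [hp b hb] at hpb

theorem dropWhile_not_mem_append_singleton [DecidableEq B] {R : List B} {b : B} :
    ∀ {q : List B}, q.Nodup → (∀ x ∈ q.dropWhile (· ∈ R), x ∉ R) →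
      (b ∈ q → (q.dropWhile (· ∈ R)).head? = some b) →
      ∀ x ∈ q.dropWhile (· ∈ R ++ [b]), x ∉ R ++ [b]
  | [], _, _, _ => by simp
  | c :: q, hq, hR, hb => by
    by_cases hcR : c ∈ R
    · have hc : c ∈ R ++ [b] := mem_append_left _ hcR
      simp only [dropWhile_cons, hcR, hc, decide_true, if_true] at hR hb ⊢
      exact dropWhile_not_mem_append_singleton hq.of_cons hR (fun h => hb (mem_cons_of_mem c h))
    · simp only [dropWhile_cons, hcR, decide_false] at hR hb
      by_cases hcb : c = b
      · subst hcb
        intro x hx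
        simp only [dropWhile_cons, mem_append_right R (mem_singleton_self c), decide_true,
          if_true] at hx
        have hxq := (dropWhile_sublist _).mem hx
        simpa [hR x (mem_cons_of_mem c hxq)] using ne_of_mem_of_not_mem hxq (nodup_cons.mp hq).1
      · have hbq : b ∉ c :: q := fun h => hcb (by simpa using hb h)
        have hc : c ∉ R ++ [b] := by simp [hcR, hcb]
        simp only [dropWhile_cons, hc, decide_false]
        exact fun x hx => by simpa [hR x hx] using ne_of_mem_of_not_mem hx hbq

end List

section Processing
variable {B P : Type} [DecidableEq B] {Q : List (List B)}

theorem List.eq_of_mem_of_mem_of_nodup_flatten_s14 (hnd : Q.flatten.Nodup) {q r : List B}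
    (hq : q ∈ Q) (hr : r ∈ Q) {x : B} (hxq : x ∈ q) (hxr : x ∈ r) : q = r := by
  have : Std.Symm (List.Disjoint (α := B)) := ⟨fun _ _ h => h.symm⟩
  by_contra hne
  exact (List.nodup_flatten.mp hnd).2.forall hq hr hne hxq hxr

theorem mem_map_of_mem_openAfter {plt : B → P} {R : List B} {t : P}
    (h : t ∈ openAfter Q plt R) : t ∈ R.map plt :=
  let ⟨⟨b, hb, hbt⟩, _⟩ := h
  List.mem_map.mpr ⟨b, hb, hbt⟩

theorem openAfter_finite (plt : B → P) (R : List B) : (openAfter Q plt R).Finite :=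
  (R.map plt).finite_toSet.subset fun _ => mem_map_of_mem_openAfter

namespace IsProcessing
variable {ord : List B}

theorem dropWhile_take_not_mem (hnd : Q.flatten.Nodup) (hP : IsProcessing Q ord) :
    ∀ i, ∀ q ∈ Q, ∀ x ∈ q.dropWhile (· ∈ ord.take i), x ∉ ord.take i
  | 0 => by simp
  | i + 1 => by
    rcases lt_or_ge i ord.length with hi | hi
    · rw [← List.take_append_getElem hi]
      intro q hq
      obtain ⟨d, hd, hhead⟩ := hP.2 i hi
      obtain ⟨r, hr, rfl⟩ := List.mem_map.mp hd
      refine List.dropWhile_not_mem_append_singleton ((List.nodup_flatten.mp hnd).1 q hq)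
        (dropWhile_take_not_mem hnd hP i q hq) fun hiq => ?_
      have hir : ord[i] ∈ r := (List.dropWhile_sublist _).mem (List.mem_of_mem_head? hhead)
      rwa [List.eq_of_mem_of_mem_of_nodup_flatten_s14 hnd hq hr hiq hir]
    · rw [List.take_of_length_le (by omega : ord.length ≤ i + 1)]
      simpa [List.take_of_length_le hi] using dropWhile_take_not_mem hnd hP i

theorem mem_openAfter_iff (hnd : Q.flatten.Nodup) (hP : IsProcessing Q ord) (plt : B → P)
    (i : ℕ) {t : P} :
    t ∈ openAfter Q plt (ord.take i) ↔
      t ∈ (ord.take i).map plt ∧ ∃ b ∈ Q.flatten, b ∉ ord.take i ∧ plt b = t := by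
  have hrem : ∀ q ∈ Q, ∀ b, b ∈ q.dropWhile (· ∈ ord.take i) ↔ b ∈ q ∧ b ∉ ord.take i :=
    fun q hq b => by
      simpa using List.mem_dropWhile_iff (p := (· ∈ ord.take i))
        (by simpa using hP.dropWhile_take_not_mem hnd i q hq)
  simp only [openAfter, confAfter, Set.mem_ofPred_eq, List.mem_map, List.mem_flatten,
    exists_exists_and_eq_and]
  constructor
  · rintro ⟨hstart, q, hq, b, hb, rfl⟩
    exact ⟨hstart, b, ⟨q, hq, ((hrem q hq b).mp hb).1⟩, ((hrem q hq b).mp hb).2, rfl⟩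
  · rintro ⟨hstart, b, ⟨q, hq, hbq⟩, hbi, rfl⟩
    exact ⟨hstart, q, hq, b, (hrem q hq b).mpr ⟨hbq, hbi⟩, rfl⟩

end IsProcessing

theorem mem_of_not_exists_front_mem_openAfter {plt : B → P} {R S : List B}
    (hR : ∀ q ∈ Q, ∀ x ∈ q.dropWhile (· ∈ R), x ∉ R)
    (hfront : ¬ ∃ q ∈ confAfter Q S, ∃ b, q.head? = some b ∧ plt b ∈ openAfter Q plt S)
    (hlab : R.map plt ⊆ S.map plt) {b : B} (hbR : b ∈ R) (hbQ : b ∈ Q.flatten) : b ∈ S := by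
  by_contra hbS
  obtain ⟨q, hq, hbq⟩ := List.mem_flatten.mp hbQ
  obtain ⟨a, rest, hqS, haR⟩ := List.exists_dropWhile_eq_cons (p := (· ∈ R)) (r := (· ∈ S))
    (by simpa using hR q hq) hbq (by simpa using hbR) (by simpa using hbS)
  obtain ⟨c, hcS, hca⟩ := List.mem_map.mp (hlab (List.mem_map_of_mem (by simpa using haR)))
  have hqconf : q.dropWhile (· ∈ S) ∈ confAfter Q S := List.mem_map.mpr ⟨q, hq, rfl⟩
  exact hfront ⟨_, hqconf, a, by rw [hqS]; rfl, ⟨c, hcS, hca⟩,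
    _, hqconf, a, by rw [hqS]; exact List.mem_cons_self, rfl⟩

theorem openAfter_take_subset_of_removed_subset {plt : B → P} (hnd : Q.flatten.Nodup)
    {ordP ord : List B} (hP : IsProcessing Q ordP) (hP' : IsProcessing Q ord) {s i y : ℕ}
    (hsi : s < i) (hs : s < ord.length) (hy : y < ordP.length) (hlabel : plt ord[s] = plt ordP[y])
    (hnew : plt ordP[y] ∉ (ordP.take y).map plt) (hremoved : ∀ b ∈ ordP.take y, b ∈ ord.take s)
    (hstarted : (ord.take i).map plt ⊆ (ordP.take (y + 1)).map plt) :
    openAfter Q plt (ord.take i) ⊆ openAfter Q plt (ordP.take (y + 1)) := by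
  intro u hu
  rw [hP'.mem_openAfter_iff hnd] at hu
  rw [hP.mem_openAfter_iff hnd]
  obtain ⟨hu_started, c, hcQ, hci, rfl⟩ := hu
  refine ⟨hstarted hu_started, ?_⟩
  have hsi' : ord[s] ∈ ord.take i := List.mem_take_iff_getElem.mpr ⟨s, by omega, rfl⟩
  have hcy : c ∉ ordP.take y := fun h => hci (List.take_subset_take_left _ hsi.le (hremoved c h))
  rw [← List.take_append_getElem hy]
  by_cases hc : c = ordP[y]
  · refine ⟨ord[s], hP'.1.subset (List.getElem_mem hs), ?_, by rw [hlabel, hc]⟩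
    simp only [List.mem_append, List.mem_singleton, not_or]
    exact ⟨fun h => hnew (hlabel ▸ List.mem_map_of_mem h), fun h => hci (hc ▸ h ▸ hsi')⟩
  · refine ⟨c, hcQ, ?_, rfl⟩
    simp only [List.mem_append, List.mem_singleton, not_or]
    exact ⟨hcy, hc⟩

end Processing

section PalletSolution
variable {B P : Type} [DecidableEq P] {l : List B} {f : B → P} {T : List P}

theorem exists_firstDedup_map_take_eq_take (hl : firstDedup (l.map f) = T) (i : ℕ) :
    ∃ j ≤ T.length, firstDedup ((l.take i).map f) = T.take j := by
  have h : firstDedup ((l.take i).map f) <+: T := by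
    rw [← hl, List.map_take]
    exact (List.take_prefix _ _).firstDedup
  exact ⟨_, h.length_le, List.prefix_iff_eq_take.mp h⟩

theorem exists_opening_index (hl : firstDedup (l.map f) = T) {k : ℕ} (hk : k < T.length) :
    ∃ s, ∃ hs : s < l.length, f l[s] = T[k] ∧ T[k] ∉ (l.take s).map f ∧
      firstDedup ((l.take s).map f) = T.take k ∧
      firstDedup ((l.take (s + 1)).map f) = T.take (k + 1) := by
  have hT : T.Nodup := hl ▸ nodup_firstDedup _
  have hmem : T[k] ∈ l.map f := by
    rw [← mem_firstDedup, hl]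
    exact T.getElem_mem hk
  obtain ⟨s, hs, hfs, hnew⟩ := List.exists_getElem_eq_not_mem_map_take hmem
  have hsucc : firstDedup ((l.take (s + 1)).map f) = firstDedup ((l.take s).map f) ++ [T[k]] := by
    rw [← List.take_append_getElem hs, List.map_append, List.map_singleton, firstDedup_concat,
      if_neg (by rwa [hfs]), hfs]
  have hpre : firstDedup ((l.take (s + 1)).map f) <+: T := by
    rw [← hl, List.map_take]
    exact (List.take_prefix _ _).firstDedup
  have htake := List.eq_take_of_append_getElem_prefix hT hk (hsucc ▸ hpre)
  refine ⟨s, hs, hfs, hnew, htake, ?_⟩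
  rw [hsucc, htake, List.take_append_getElem hk]

theorem firstDedup_map_eq_of_head?_filter (hT : T.Nodup) (hsub : ∀ t ∈ T, t ∈ l.map f)
    (hnext : ∀ i (hi : i < l.length), f l[i] ∉ (l.take i).map f →
      (T.filter fun t => decide (t ∉ (l.take i).map f)).head? = some (f l[i])) :
    firstDedup (l.map f) = T := by
  have hpre : ∀ i, firstDedup ((l.take i).map f) <+: T := by
    intro i
    induction i with
    | zero => simp
    | succ i ih =>
      rcases lt_or_ge i l.length with hi | hi
      · rw [← List.take_append_getElem hi, List.map_append, List.map_singleton, firstDedup_concat]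
        split_ifs with hold
        · exact ih
        · have hF := List.prefix_iff_eq_take.mp ih
          have hhead := List.head?_filter_not_mem_eq_getElem? hT (s := (l.take i).map f)
            fun x => by rw [← mem_firstDedup, hF]
          rw [hnext i hi hold] at hhead
          rw [hF, ← Option.toList_some, hhead, ← List.take_add_one]
          exact List.take_prefix _ _
      · rwa [List.take_of_length_le (by omega : l.length ≤ i + 1), ← List.take_of_length_le hi]
  have hall : firstDedup (l.map f) <+: T := by simpa using hpre l.length
  exact hall.eq_of_length (le_antisymm hall.length_le
    (hT.subperm fun t ht => mem_firstDedup.mpr (hsub t ht)).length_le)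

end PalletSolution

section Greedy
variable {B P : Type} [DecidableEq B] [DecidableEq P]

open Classical in
def IsGreedy (Q : List (List B)) (plt : B → P) (T : List P) (ord : List B) : Prop :=
  ∀ i (hi : i < ord.length),
    if ∃ q ∈ confAfter Q (ord.take i), ∃ b, q.head? = some b ∧
         plt b ∈ openAfter Q plt (ord.take i)
    then plt ord[i] ∈ openAfter Q plt (ord.take i)
    else (T.filter fun t => decide (t ∉ (ord.take i).map plt)).head? =
           some (plt ord[i])

namespace IsGreedy
variable {Q : List (List B)} {plt : B → P} {T : List P} {ord : List B}

theorem not_exists_front_mem_openAfter (hg : IsGreedy Q plt T ord) {i : ℕ} (hi : i < ord.length)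
    (hnew : plt ord[i] ∉ (ord.take i).map plt) :
    ¬ ∃ q ∈ confAfter Q (ord.take i), ∃ b, q.head? = some b ∧
      plt b ∈ openAfter Q plt (ord.take i) := by
  intro h
  have := hg i hi
  rw [if_pos h] at this
  exact hnew (mem_map_of_mem_openAfter this)

theorem head?_filter_eq (hg : IsGreedy Q plt T ord) {i : ℕ} (hi : i < ord.length)
    (hnew : plt ord[i] ∉ (ord.take i).map plt) :
    (T.filter fun t => decide (t ∉ (ord.take i).map plt)).head? = some (plt ord[i]) := by
  have := hg i hi
  rwa [if_neg (hg.not_exists_front_mem_openAfter hi hnew)] at this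

theorem exists_openAfter_superset (hnd : Q.flatten.Nodup) {ordP : List B}
    (hP : IsProcessing Q ordP) (hP' : IsProcessing Q ord) (hg : IsGreedy Q plt T ord)
    (hT : firstDedup (ordP.map plt) = T) (hT' : firstDedup (ord.map plt) = T) (i : ℕ) :
    ∃ x ≤ ordP.length, openAfter Q plt (ord.take i) ⊆ openAfter Q plt (ordP.take x) := by
  obtain ⟨j, hjT, hj⟩ := exists_firstDedup_map_take_eq_take hT' i
  cases j with
  | zero =>
    have hnil : (ord.take i).map plt = [] := by
      rw [List.eq_nil_iff_forall_not_mem]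
      intro u hu
      rw [← mem_firstDedup, hj] at hu
      simp at hu
    exact ⟨0, Nat.zero_le _, by simp [List.map_eq_nil_iff.mp hnil]⟩
  | succ k =>
    obtain ⟨s, hs, hs_lab, hs_new, hs_fd, -⟩ := exists_opening_index hT' hjT
    obtain ⟨y, hy, hy_lab, hy_new, hy_fd, hy_fd'⟩ := exists_opening_index hT hjT
    have hsi : s < i := by
      by_contra! his
      have hk : T[k] ∈ (ord.take i).map plt := by
        rw [← mem_firstDedup, hj]
        exact List.mem_take_iff_getElem.mpr ⟨k, by omega, rfl⟩
      exact hs_new (List.map_subset _ (List.take_subset_take_left _ his) hk)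
    refine ⟨y + 1, hy, openAfter_take_subset_of_removed_subset hnd hP hP' hsi hs hy
      (hs_lab.trans hy_lab.symm) (by rwa [hy_lab]) (fun b hb => ?_) fun u hu => ?_⟩
    · refine mem_of_not_exists_front_mem_openAfter (hP.dropWhile_take_not_mem hnd y)
        (hg.not_exists_front_mem_openAfter hs (by rwa [hs_lab])) (fun u hu => ?_) hb
        (hP.1.subset (List.mem_of_mem_take hb))
      rwa [← mem_firstDedup, hs_fd, ← hy_fd, mem_firstDedup]
    · rwa [← mem_firstDedup, hy_fd', ← hj, mem_firstDedup]

end IsGreedy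
end Greedy

open Classical in
/-- Let `T` be the pallet solution of some processing
`ordP` of `Q`, and let `ord'` be any processing of `Q` that follows the greedy
rule: whenever a front bin of some remaining sequence is destined for an
already open pallet, such a bin is removed; otherwise the next not yet opened
pallet of `T` is opened. Then `ord'` also has pallet solution `T`, and `ord'`
never has more open pallets than `ordP` does: no processing of `Q` with pallet
solution `T` uses fewer stack-up places than the greedy one. -/
theorem greedy_palletSolution_optimal {B P : Type} [DecidableEq B] [DecidableEq P]
    (Q : List (List B)) (plt : B → P) (hnd : Q.flatten.Nodup)
    (ordP : List B) (hP : IsProcessing Q ordP)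
    (T : List P) (hT : T = firstDedup (ordP.map plt))
    (ord' : List B) (hP' : IsProcessing Q ord')
    (hgreedy : ∀ i (hi : i < ord'.length),
      if ∃ q ∈ confAfter Q (ord'.take i), ∃ b, q.head? = some b ∧
           plt b ∈ openAfter Q plt (ord'.take i)
      then plt ord'[i] ∈ openAfter Q plt (ord'.take i)
      else (T.filter fun t => decide (t ∉ (ord'.take i).map plt)).head? =
             some (plt ord'[i])) :
    firstDedup (ord'.map plt) = T ∧
    ∀ p : ℕ, UsesAtMost Q plt ordP p → UsesAtMost Q plt ord' p := by
  have hg : IsGreedy Q plt T ord' := hgreedy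
  have hT' : firstDedup (ord'.map plt) = T :=
    firstDedup_map_eq_of_head?_filter (hT ▸ nodup_firstDedup _)
      (fun t ht => ((hP.1.trans hP'.1.symm).map plt).subset (mem_firstDedup.mp (hT ▸ ht)))
      fun _ hi hnew => hg.head?_filter_eq hi hnew
  refine ⟨hT', fun p hp i _ => ?_⟩
  obtain ⟨x, hx, hsub⟩ := hg.exists_openAfter_superset hnd hP hP' hT.symm hT' i
  exact (Set.ncard_le_ncard hsub (openAfter_finite plt _)).trans (hp x hx)
end
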